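/- Let p be an odd prime and F: V → F_{p^m} a vectorial dual-bent function satisfying Condition I with sign ε. Let ψ be a multiplicative character of F_{p^m} of order greater than 2 (extended by ψ(0) = 0), χ_1 the canonical additive character of V, and a ∈ V \ {0}. Then the hybrid sum Ŝ_1 := Σ_{x ∈ V} ψ(F(x)) χ_1(ax) has absolute value 0 if F^*(a) = 0 and absolute value p^{n/2} if F^*(a) ≠ 0. -/

import Mathlib

/-!
Multiplying `Ŝ₁` by the Gauss sum `G(ψ⁻¹, λ₁)` and expanding
`ψ(F x) G(ψ⁻¹, λ₁) = ∑_c ψ⁻¹(c) λ₁(c F x)` turns `Ŝ₁` into a `ψ⁻¹`-weighted sum of Walsh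
transforms of the components `F_c` at `-a`, so that
`G(ψ⁻¹, λ₁) Ŝ₁ = ε p^{n/2} ∑_c ψ⁻¹(c) λ₁(c^{1-d} F^*(a))`.
If `F^*(a) = 0` the right-hand sum is a complete sum of a nontrivial character and vanishes.
Otherwise `c ↦ c^{d-1}` permutes `F_{p^m}^*`, so this sum is a Gauss sum of another nontrivial
character; both Gauss sums have absolute value `p^{m/2}`, whence `|Ŝ₁| = p^{n/2}`.
-/

open Complex Finset

/-- `ζ_p^k` for `k ∈ Z/p`. -/
noncomputable def zetaP (p : ℕ) (k : ZMod p) : ℂ :=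
  Complex.exp (2 * Real.pi * Complex.I * (k.val : ℂ) / p)

open AddChar MulChar

lemma zetaP_eq_stdAddChar (p : ℕ) [NeZero p] (k : ZMod p) : zetaP p k = ZMod.stdAddChar k := by
  rw [ZMod.stdAddChar_apply, ZMod.toCircle_apply, zetaP]

lemma zetaP_add (p : ℕ) [NeZero p] (j k : ZMod p) : zetaP p (j + k) = zetaP p j * zetaP p k := by
  simp only [zetaP_eq_stdAddChar, AddChar.map_add_eq_mul]

noncomputable def traceAddChar (p : ℕ) [NeZero p] (K : Type*) [CommRing K] [Algebra (ZMod p) K] :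
    AddChar K ℂ :=
  ZMod.stdAddChar.compAddMonoidHom (Algebra.trace (ZMod p) K).toAddMonoidHom

lemma traceAddChar_apply (p : ℕ) [NeZero p] {K : Type*} [CommRing K] [Algebra (ZMod p) K]
    (y : K) : traceAddChar p K y = zetaP p (Algebra.trace (ZMod p) K y) := by
  rw [zetaP_eq_stdAddChar]; rfl

lemma isPrimitive_traceAddChar (p : ℕ) [Fact p.Prime] (K : Type*) [Field K] [Fintype K]
    [Algebra (ZMod p) K] : (traceAddChar p K).IsPrimitive := by
  refine IsPrimitive.of_ne_one (ne_one_iff.2 ?_)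
  obtain ⟨y, hy⟩ := Algebra.trace_surjective (ZMod p) K 1
  refine ⟨y, ?_⟩
  change ZMod.stdAddChar (Algebra.trace (ZMod p) K y) ≠ 1
  rw [hy, ← (ZMod.stdAddChar (N := p)).map_zero_eq_one, ZMod.injective_stdAddChar.ne_iff]
  exact one_ne_zero

lemma norm_gaussSum {R : Type*} [Field R] [Fintype R] {χ : MulChar R ℂ} (hχ : χ ≠ 1)
    {ψ : AddChar R ℂ} (hψ : ψ.IsPrimitive) : ‖gaussSum χ ψ‖ = √(Fintype.card R) := by
  have h := gaussSum_mul_gaussSum_eq_card hχ hψ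
  rw [← star_gaussSum_eq, ← starRingEnd_apply, mul_conj] at h
  have h' : normSq (gaussSum χ ψ) = Fintype.card R := by exact_mod_cast h
  rw [norm_def, h']

lemma gaussSum_mulShift_eq_of_ne_one {K : Type*} [Field K] [Fintype K] {R : Type*} [CommRing R]
    [IsDomain R] {χ : MulChar K R} (hχ : χ ≠ 1) (ψ : AddChar K R) (y : K) :
    gaussSum χ (ψ.mulShift y) = χ⁻¹ y * gaussSum χ ψ := by
  rcases eq_or_ne y 0 with rfl | hy
  · rw [mulShift_zero, gaussSum_one_right hχ, MulChar.map_zero, zero_mul]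
  · exact gaussSum_mulShift_eq χ ψ (Units.mk0 y hy)

lemma pow_bijective_of_coprime_card_sub_one {K : Type*} [Field K] [Fintype K] {j : ℕ}
    (hj : j ≠ 0) (hcop : (Fintype.card K - 1).Coprime j) :
    Function.Bijective (fun c : K ↦ c ^ j) := by
  refine Finite.injective_iff_bijective.1 fun x y hxy ↦ ?_
  rcases eq_or_ne x 0 with rfl | hx
  · exact ((pow_eq_zero_iff hj).1 (hxy.symm.trans (zero_pow hj))).symm
  rcases eq_or_ne y 0 with rfl | hy
  · exact (pow_eq_zero_iff hj).1 (hxy.trans (zero_pow hj))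
  have hcard : (Nat.card Kˣ).Coprime j := by rwa [Nat.card_units, Nat.card_eq_fintype_card]
  have := (Nat.Coprime.pow_left_bijective hcard).1 (a₁ := Units.mk0 x hx) (a₂ := Units.mk0 y hy)
    (Units.ext (by simpa using hxy))
  simpa using congrArg Units.val this

lemma exists_mulChar_apply_pow_eq {K : Type*} [Field K] [Fintype K] {R : Type*} [CommRing R]
    (ψ : MulChar K R) {j : ℕ} (hj : j ≠ 0) (hcop : (Fintype.card K - 1).Coprime j) :
    ∃ μ : MulChar K R, ∀ c, μ (c ^ j) = ψ c := by
  have hcard : (Nat.card Kˣ).Coprime j := by rwa [Nat.card_units, Nat.card_eq_fintype_card]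
  -- Bézout: `gcdB` inverts `j` modulo `#Kˣ`, which is how `powCoprime` undoes `u ↦ u ^ j`.
  refine ⟨ψ ^ (Nat.card Kˣ).gcdB j, fun c ↦ ?_⟩
  rcases eq_or_ne c 0 with rfl | hc
  · rw [zero_pow hj, MulChar.map_zero, MulChar.map_zero]
  · lift c to Kˣ using hc.isUnit
    rw [← Units.val_pow_eq_pow_val, zpow_apply_coe]
    exact congrArg (ψ ·) (congrArg Units.val ((powCoprime hcard).left_inv c))

lemma norm_sum_mulChar_mul_addChar_pow_mul {K : Type*} [Field K] [Fintype K] {ψ : MulChar K ℂ}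
    (hψ : ψ ≠ 1) {χ : AddChar K ℂ} (hχ : χ.IsPrimitive) {j : ℕ} (hj : j ≠ 0)
    (hcop : (Fintype.card K - 1).Coprime j) {b : K} (hb : b ≠ 0) :
    ‖∑ c, ψ c * χ (c ^ j * b)‖ = √(Fintype.card K) := by
  obtain ⟨μ, hμ⟩ := exists_mulChar_apply_pow_eq ψ hj hcop
  have hμ1 : μ ≠ 1 := by
    rintro rfl
    refine hψ (MulChar.ext fun u ↦ ?_)
    rw [← hμ, ← Units.val_pow_eq_pow_val, MulChar.one_apply_coe, MulChar.one_apply_coe]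
  have hsum : ∑ c, ψ c * χ (c ^ j * b) = gaussSum μ (χ.mulShift b) := by
    simp_rw [← hμ]
    rw [(pow_bijective_of_coprime_card_sub_one hj hcop).sum_comp (fun c ↦ μ c * χ (c * b))]
    simp only [gaussSum, mulShift_apply, mul_comm b]
  rw [hsum, norm_gaussSum hμ1 (IsPrimitive.of_ne_one (hχ hb))]

lemma sum_inv_mulChar_mul_zpow_one_sub {K : Type*} [Field K] [Fintype K] (ψ : MulChar K ℂ)
    (f : K → ℂ) {d : ℕ} (hd : 1 ≤ d) :
    ∑ c, ψ⁻¹ c * f (c ^ ((1 : ℤ) - d)) = ∑ c, ψ c * f (c ^ (d - 1)) := by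
  refine (Fintype.sum_equiv (Equiv.inv K) _ _ fun c ↦ ?_).symm
  rw [Equiv.inv_apply, MulChar.inv_apply', inv_inv, inv_zpow', neg_sub, ← zpow_natCast,
    Nat.cast_sub hd, Nat.cast_one]

lemma gaussSum_inv_mul_sum_mulChar_mul_zetaP {p : ℕ} [NeZero p] {K : Type*} [Field K]
    [Fintype K] [Algebra (ZMod p) K] {ψ : MulChar K ℂ} (hψ : ψ ≠ 1) {V : Type*} [Fintype V]
    (F : V → K) (g : V → ZMod p) :
    gaussSum ψ⁻¹ (traceAddChar p K) * ∑ x, ψ (F x) * zetaP p (g x)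
      = ∑ c, ψ⁻¹ c * ∑ x, zetaP p (Algebra.trace (ZMod p) K (c * F x) + g x) := by
  calc _ = ∑ x, gaussSum ψ⁻¹ ((traceAddChar p K).mulShift (F x)) * zetaP p (g x) := by
        rw [mul_sum]
        refine sum_congr rfl fun x _ ↦ ?_
        rw [gaussSum_mulShift_eq_of_ne_one (inv_ne_one.2 hψ), inv_inv, mul_left_comm, mul_assoc]
    _ = _ := by
        simp only [gaussSum, mulShift_apply, traceAddChar_apply, sum_mul, mul_sum, mul_assoc,
          ← zetaP_add]
        rw [sum_comm]
        simp only [mul_comm (F _)]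

theorem hybrid_sum_S1hat_abs_general
    (p n m d : ℕ) [Fact p.Prime]
    (V : Type*) [AddCommGroup V] [Module (ZMod p) V] [Fintype V]
    (K : Type*) [Field K] [Fintype K] [Algebra (ZMod p) K]
    (hK : Fintype.card K = p ^ m)
    (B : V →ₗ[ZMod p] V →ₗ[ZMod p] ZMod p)
    (F Fstar : V → K)
    (ε : ℤ) (hε : ε = 1 ∨ ε = -1)
    (hd : 2 ≤ d)
    (hgcd : Nat.gcd (d - 1) (p ^ m - 1) = 1)
    (hFstarneg : ∀ a : V, Fstar (-a) = Fstar a)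
    (hWalsh : ∀ c : K, c ≠ 0 → ∀ a : V,
      ∑ x : V, zetaP p (Algebra.trace (ZMod p) K (c * F x) - B a x)
        = (ε : ℂ) * (p : ℂ) ^ (n / 2)
            * zetaP p (Algebra.trace (ZMod p) K (c ^ ((1 : ℤ) - d) * Fstar a)))
    (ψ : MulChar K ℂ) (hψ1 : ψ ≠ 1)
    (a : V) :
    (Fstar a = 0 →
      ‖∑ x : V, ψ (F x) * zetaP p (B a x)‖ = 0)
    ∧ (Fstar a ≠ 0 →
      ‖∑ x : V, ψ (F x) * zetaP p (B a x)‖ = (p : ℝ) ^ (n / 2)) := by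
  set χ := traceAddChar p K
  set T := ∑ c, ψ⁻¹ c * χ (c ^ ((1 : ℤ) - d) * Fstar a)
  have hmain :
      gaussSum ψ⁻¹ χ * ∑ x, ψ (F x) * zetaP p (B a x) = ε * (p : ℂ) ^ (n / 2) * T := by
    simp only [T]
    rw [gaussSum_inv_mul_sum_mulChar_mul_zetaP hψ1, mul_sum]
    refine sum_congr rfl fun c _ ↦ ?_
    rcases eq_or_ne c 0 with rfl | hc
    · simp only [MulChar.map_zero, zero_mul, mul_zero]
    · have hneg : ∀ x, Algebra.trace (ZMod p) K (c * F x) + B a x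
          = Algebra.trace (ZMod p) K (c * F x) - B (-a) x := by simp
      simp only [hneg]
      rw [hWalsh c hc, hFstarneg, traceAddChar_apply]
      ring
  have hG : ‖gaussSum ψ⁻¹ χ‖ = √(Fintype.card K) :=
    norm_gaussSum (inv_ne_one.2 hψ1) (isPrimitive_traceAddChar p K)
  have hG0 : ‖gaussSum ψ⁻¹ χ‖ ≠ 0 := by
    rw [hG]
    exact (Real.sqrt_pos.2 (by exact_mod_cast Fintype.card_pos)).ne'
  have hnorm := congrArg norm hmain
  have hε1 : ‖(ε : ℂ)‖ = 1 := by rcases hε with rfl | rfl <;> simp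
  rw [norm_mul, norm_mul, norm_mul, hε1, one_mul, norm_pow, Complex.norm_natCast] at hnorm
  refine ⟨fun hb ↦ ?_, fun hb ↦ ?_⟩
  · have hT : T = 0 := by
      simp only [T, hb, mul_zero, map_zero_eq_one, mul_one]
      exact MulChar.sum_eq_zero_of_ne_one (inv_ne_one.2 hψ1)
    rw [hT, norm_zero, mul_zero] at hnorm
    exact (mul_eq_zero.1 hnorm).resolve_left hG0
  · have hcop : (Fintype.card K - 1).Coprime (d - 1) := by
      rw [hK]; exact Nat.coprime_comm.1 hgcd
    have hT : ‖T‖ = √(Fintype.card K) := by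
      simp only [T]
      rw [sum_inv_mulChar_mul_zpow_one_sub ψ (fun y ↦ χ (y * Fstar a)) (by omega)]
      exact norm_sum_mulChar_mul_addChar_pow_mul hψ1 (isPrimitive_traceAddChar p K) (by omega)
        hcop hb
    rw [hT, ← hG, mul_comm] at hnorm
    exact mul_right_cancel₀ hG0 hnorm

/-- Under Condition I with sign `ε`, for a multiplicative character `ψ` of
`F_{p^m}` of order greater than 2 (i.e. `ψ ≠ 1` and `ψ² ≠ 1`) and `a ≠ 0`,
the hybrid sum `Ŝ_1 = Σ_{x ∈ V} ψ(F(x)) χ_1(ax)` has absolute value `0` if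
`F^*(a) = 0` and `p^{n/2}` if `F^*(a) ≠ 0`. -/
theorem hybrid_sum_S1hat_abs
    (p n m d : ℕ) [Fact p.Prime] (hp : p ≠ 2)
    (hm : 1 ≤ m) (hn : Even n) (hmn : 2 * m ≤ n)
    (V : Type*) [AddCommGroup V] [Module (ZMod p) V] [Fintype V]
    (hV : Fintype.card V = p ^ n)
    (K : Type*) [Field K] [Fintype K] [DecidableEq K] [Algebra (ZMod p) K]
    (hK : Fintype.card K = p ^ m)
    (B : V →ₗ[ZMod p] V →ₗ[ZMod p] ZMod p)
    (hBsym : ∀ v w, B v w = B w v)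
    (hBnd : ∀ v, (∀ w, B v w = 0) → v = 0)
    (F Fstar : V → K)
    (ε : ℤ) (hε : ε = 1 ∨ ε = -1)
    (hd : 2 ≤ d) (hdeven : Even d)
    (hgcd : Nat.gcd (d - 1) (p ^ m - 1) = 1)
    (hF0 : F 0 = 0) (hFstar0 : Fstar 0 = 0)
    (hFstarneg : ∀ a : V, Fstar (-a) = Fstar a)
    (hWalsh : ∀ c : K, c ≠ 0 → ∀ a : V,
      ∑ x : V, zetaP p (Algebra.trace (ZMod p) K (c * F x) - B a x)
        = (ε : ℂ) * (p : ℂ) ^ (n / 2)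
            * zetaP p (Algebra.trace (ZMod p) K (c ^ ((1 : ℤ) - d) * Fstar a)))
    (ψ : MulChar K ℂ) (hψ1 : ψ ≠ 1) (hψ2 : ψ * ψ ≠ 1)
    (a : V) (ha : a ≠ 0) :
    (Fstar a = 0 →
      ‖∑ x : V, ψ (F x) * zetaP p (B a x)‖ = 0)
    ∧ (Fstar a ≠ 0 →
      ‖∑ x : V, ψ (F x) * zetaP p (B a x)‖ = (p : ℝ) ^ (n / 2)) :=
  hybrid_sum_S1hat_abs_general p n m d V K hK B F Fstar ε hε hd hgcd hFstarneg hWalsh ψ hψ1 a
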